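/- Let A be an algebra, I a two-sided ideal, π : A → A/I the quotient map with linear section σ (π∘σ = id). Let ρ be a Z(A)-multilinear antisymmetric n-form on derivations of A with values in A. Define ρ|_I(X_1,…,X_n) = π(ρ(σ∘X_1∘π, …, σ∘X_n∘π)) for derivations X_i of A/I such that each σ∘X_i∘π is a derivation of A and [σ∘X_j∘π, σ∘X_k∘π] = σ∘[X_j,X_k]∘π. Then the Koszul differential commutes with restriction: (dρ)|_I = d_I (ρ|_I). -/

import Mathlib

/-- A derivation of a ring, as a plain function satisfying the Leibniz rule. -/
def IsDeriv {A : Type*} [Ring A] (D : A → A) : Prop :=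
  (∀ a b : A, D (a + b) = D a + D b) ∧ (∀ a b : A, D (a * b) = D a * b + a * D b)

/-- The Koszul differential of an `(m+1)`-form `ρ` evaluated on an `(m+2)`-tuple of
derivations `D`:
`dρ(D₁,…,D_{m+2}) = Σ_j (−1)^{j+1} D_j ρ(…,D̂_j,…) +
 Σ_{j<k} (−1)^{j+k} ρ([D_j,D_k],…,D̂_j,…,D̂_k,…)`. -/
def koszul {A : Type*} [Ring A] (m : ℕ)
    (ρ : (Fin (m + 1) → (A → A)) → A) (D : Fin (m + 2) → (A → A)) : A :=
  (∑ j : Fin (m + 2), ((-1 : ℤ) ^ (j : ℕ)) • (D j) (ρ (j.removeNth D))) +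
  ∑ j : Fin (m + 2), ∑ k : Fin (m + 2),
    if h : (j : ℕ) < (k : ℕ) then
      ((-1 : ℤ) ^ ((j : ℕ) + (k : ℕ))) •
        ρ (Fin.cons (fun a => D j (D k a) - D k (D j a))
            (Fin.removeNth ⟨(j : ℕ), by have := k.isLt; omega⟩ (Fin.removeNth k D)))
    else 0

theorem map_koszul_lift {A B F : Type*} [Ring A] [Ring B] [FunLike F A B]
    [AddMonoidHomClass F A B] (φ : F) (lift : (B → B) → (A → A)) (m : ℕ)
    (ρ : (Fin (m + 1) → (A → A)) → A) (X : Fin (m + 2) → (B → B))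
    (hφ : ∀ j a, φ (lift (X j) a) = X j (φ a))
    (hbracket : ∀ j k a, lift (X j) (lift (X k) a) - lift (X k) (lift (X j) a) =
      lift (fun b => X j (X k b) - X k (X j b)) a) :
    φ (koszul m ρ (fun i => lift (X i))) =
      koszul m (fun Y => φ (ρ (fun i => lift (Y i)))) X := by
  unfold koszul
  rw [map_add, map_sum, map_sum]
  congr 1
  · refine Finset.sum_congr rfl fun j _ => ?_
    rw [map_zsmul, hφ]
    rfl
  · refine Finset.sum_congr rfl fun j _ => ?_
    rw [map_sum]
    refine Finset.sum_congr rfl fun k _ => ?_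
    split_ifs
    · rw [map_zsmul]
      congr 3
      funext i
      refine Fin.cases (funext fun a => hbracket j k a) (fun _ => rfl) i
    · exact map_zero φ

theorem koszul_commutes_with_restriction_general
    (R A B : Type*) [CommRing R] [Ring A] [Algebra R A] [Ring B] [Algebra R B]
    (m : ℕ)
    (π : A →ₐ[R] B)
    (σ : B →ₗ[R] A) (hσ : ∀ b : B, π (σ b) = b)
    (ρ : (Fin (m + 1) → (A → A)) → A)
    (X : Fin (m + 2) → (B → B))
    -- [σ∘Xⱼ∘π, σ∘Xₖ∘π] = σ∘[Xⱼ,Xₖ]∘π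
    (hbrkt : ∀ (i j : Fin (m + 2)) (a : A),
      σ (X i (π (σ (X j (π a))))) - σ (X j (π (σ (X i (π a))))) =
        σ (X i (X j (π a)) - X j (X i (π a)))) :
    π (koszul m ρ (fun i => fun a => σ (X i (π a)))) =
      koszul m (fun Y => π (ρ (fun i => fun a => σ (Y i (π a))))) X :=
  map_koszul_lift π (fun Y a => σ (Y (π a))) m ρ X (fun _ _ => hσ _) hbrkt

/-- The Koszul differential commutes with restriction to the quotient `B = A/I`:
`(dρ)|_I = d_I (ρ|_I)`, where the restriction of a form is
`ρ|_I(X₁,…,Xₙ) = π(ρ(σ∘X₁∘π,…,σ∘Xₙ∘π))`. -/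
theorem koszul_commutes_with_restriction
    (R A B : Type*) [CommRing R] [Ring A] [Algebra R A] [Ring B] [Algebra R B]
    (m : ℕ)
    (π : A →ₐ[R] B) (hπ : Function.Surjective π)
    (σ : B →ₗ[R] A) (hσ : ∀ b : B, π (σ b) = b)
    (ρ : (Fin (m + 1) → (A → A)) → A)
    -- Z(A)-multilinearity of ρ
    (hadd : ∀ (v : Fin (m + 1) → (A → A)) (i : Fin (m + 1)) (f g : A → A),
      ρ (Function.update v i (fun a => f a + g a)) =
        ρ (Function.update v i f) + ρ (Function.update v i g))
    (hcent : ∀ (v : Fin (m + 1) → (A → A)) (i : Fin (m + 1)) (z : A),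
      z ∈ Set.center A →
      ρ (Function.update v i (fun a => v i a * z)) = ρ v * z)
    -- antisymmetry of ρ
    (hanti : ∀ (v : Fin (m + 1) → (A → A)) (i j : Fin (m + 1)), i ≠ j →
      ρ (v ∘ Equiv.swap i j) = - ρ v)
    (X : Fin (m + 2) → (B → B))
    (hX : ∀ i, IsDeriv (X i))
    -- each σ∘Xᵢ∘π is a derivation of A
    (hlift : ∀ i, IsDeriv (fun a : A => σ (X i (π a))))
    -- [σ∘Xⱼ∘π, σ∘Xₖ∘π] = σ∘[Xⱼ,Xₖ]∘π
    (hbrkt : ∀ (i j : Fin (m + 2)) (a : A),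
      σ (X i (π (σ (X j (π a))))) - σ (X j (π (σ (X i (π a))))) =
        σ (X i (X j (π a)) - X j (X i (π a)))) :
    π (koszul m ρ (fun i => fun a => σ (X i (π a)))) =
      koszul m (fun Y => π (ρ (fun i => fun a => σ (Y i (π a))))) X :=
  koszul_commutes_with_restriction_general R A B m π σ hσ ρ X hbrkt
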